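/- arXiv:0710.5176 — 6 statements merged into one kernel-verified Lean document; each statement's English description precedes it below -/
import Mathlib

section
/- For real parts satisfying 0 < Re(w) < Re(z) < 1, the integral ∫₀^∞ λ^w |1-λ|^{-z} dλ/λ equals Γ(w)Γ(1-z)/Γ(1+w-z) + Γ(z-w)Γ(1-z)/Γ(1-w). -/
/-!
Split `(0, ∞)` at `1`. On `(0, 1)` the integrand is the Beta integrand `λ^{w-1} (1-λ)^{-z}`,
giving `B(w, 1-z)`. On `(1, ∞)` the substitution `λ = 1/x`, with `|1 - 1/x| = (1-x)/x` and
`dλ = x⁻² dx`, turns it into the Beta integrand `x^{z-w-1} (1-x)^{-z}`, giving `B(z-w, 1-z)`.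
Both Beta values are then expressed through `Γ`.
-/

open Complex Set MeasureTheory

section InvSubstitution

variable {E : Type*} [NormedAddCommGroup E] [NormedSpace ℝ E]

theorem image_inv_Ioo_zero_one : Inv.inv '' Ioo (0 : ℝ) 1 = Ioi 1 := by
  rw [image_inv_eq_inv, inv_Ioo_0_left one_pos, inv_one]

theorem hasDerivWithinAt_inv_Ioo_zero_one {x : ℝ} (hx : x ∈ Ioo (0 : ℝ) 1) :
    HasDerivWithinAt Inv.inv (-(x ^ 2)⁻¹) (Ioo 0 1) x :=
  (hasDerivAt_inv hx.1.ne').hasDerivWithinAt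

theorem integrableOn_Ioi_one_iff_intervalIntegrable_comp_inv {f : ℝ → E} :
    IntegrableOn f (Ioi 1) ↔ IntervalIntegrable (fun x : ℝ ↦ (x ^ 2)⁻¹ • f x⁻¹) volume 0 1 := by
  rw [← image_inv_Ioo_zero_one, integrableOn_image_iff_integrableOn_abs_deriv_smul
    measurableSet_Ioo (fun _ ↦ hasDerivWithinAt_inv_Ioo_zero_one) inv_injective.injOn,
    intervalIntegrable_iff_integrableOn_Ioo_of_le zero_le_one]
  simp only [abs_neg, abs_inv, abs_pow, sq_abs]

theorem integral_Ioi_one_eq_intervalIntegral_comp_inv (f : ℝ → E) :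
    ∫ x in Ioi 1, f x = ∫ x in (0 : ℝ)..1, (x ^ 2)⁻¹ • f x⁻¹ := by
  rw [← image_inv_Ioo_zero_one, integral_image_eq_integral_abs_deriv_smul
    measurableSet_Ioo (fun _ ↦ hasDerivWithinAt_inv_Ioo_zero_one) inv_injective.injOn,
    intervalIntegral.integral_of_le zero_le_one, integral_Ioc_eq_integral_Ioo]
  simp only [abs_neg, abs_inv, abs_pow, sq_abs]

end InvSubstitution

theorem ofReal_abs_one_sub_cpow_of_le_one {x : ℝ} (hx : x ≤ 1) (s : ℂ) :
    ((|1 - x| : ℝ) : ℂ) ^ s = (1 - (x : ℂ)) ^ s := by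
  rw [abs_of_nonneg (sub_nonneg.2 hx)]
  push_cast
  rfl

theorem ofReal_inv_cpow_of_pos {x : ℝ} (hx : 0 < x) (s : ℂ) :
    ((x⁻¹ : ℝ) : ℂ) ^ s = (x : ℂ) ^ (-s) := by
  rw [ofReal_inv, inv_cpow _ _ (by rw [arg_ofReal_of_nonneg hx.le]; positivity), cpow_neg]

section AbsOneSubKernel

variable (w z : ℂ)

theorem eqOn_betaIntegrand_cpow_mul_abs_one_sub_cpow :
    EqOn (fun x : ℝ ↦ (x : ℂ) ^ (w - 1) * (1 - (x : ℂ)) ^ ((1 - z) - 1))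
      (fun l : ℝ ↦ (l : ℂ) ^ (w - 1) * ((|1 - l| : ℝ) : ℂ) ^ (-z)) (Ioo 0 1) := fun x hx ↦ by
  simp only [ofReal_abs_one_sub_cpow_of_le_one hx.2.le, sub_sub_cancel_left]

theorem eqOn_betaIntegrand_inv_sq_smul_cpow_mul_abs_one_sub_cpow :
    EqOn (fun x : ℝ ↦ (x : ℂ) ^ ((z - w) - 1) * (1 - (x : ℂ)) ^ ((1 - z) - 1))
      (fun x : ℝ ↦ (x ^ 2)⁻¹ • (((x⁻¹ : ℝ) : ℂ) ^ (w - 1) * ((|1 - x⁻¹| : ℝ) : ℂ) ^ (-z)))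
      (Ioo 0 1) := by
  rintro x ⟨hx0, hx1⟩
  have habs : |1 - x⁻¹| = x⁻¹ * (1 - x) := by
    rw [abs_of_nonpos (sub_nonpos.2 ((one_le_inv₀ hx0).2 hx1.le))]
    field_simp
    ring
  dsimp only
  rw [habs, ofReal_mul, mul_cpow_ofReal_nonneg (inv_nonneg.2 hx0.le) (sub_nonneg.2 hx1.le),
    ofReal_inv_cpow_of_pos hx0, ofReal_inv_cpow_of_pos hx0, real_smul,
    show (z - w) - 1 = (-(w - 1) + - -z) - 2 by ring, cpow_sub _ _ (ofReal_ne_zero.2 hx0.ne'),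
    cpow_add _ _ (ofReal_ne_zero.2 hx0.ne'), show (1 - z) - 1 = -z by ring, cpow_ofNat]
  push_cast
  ring

theorem intervalIntegral_cpow_mul_abs_one_sub_cpow :
    ∫ l in (0 : ℝ)..1, (l : ℂ) ^ (w - 1) * ((|1 - l| : ℝ) : ℂ) ^ (-z) =
      betaIntegral w (1 - z) :=
  (intervalIntegral.integral_congr_Ioo_of_le zero_le_one
    (eqOn_betaIntegrand_cpow_mul_abs_one_sub_cpow w z)).symm

theorem integral_Ioi_one_cpow_mul_abs_one_sub_cpow :
    ∫ l in Ioi (1 : ℝ), (l : ℂ) ^ (w - 1) * ((|1 - l| : ℝ) : ℂ) ^ (-z) =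
      betaIntegral (z - w) (1 - z) := by
  rw [integral_Ioi_one_eq_intervalIntegral_comp_inv]
  exact (intervalIntegral.integral_congr_Ioo_of_le zero_le_one
    (eqOn_betaIntegrand_inv_sq_smul_cpow_mul_abs_one_sub_cpow w z)).symm

variable {w z}

theorem intervalIntegrable_cpow_mul_abs_one_sub_cpow (hw : 0 < w.re) (hz : z.re < 1) :
    IntervalIntegrable (fun l : ℝ ↦ (l : ℂ) ^ (w - 1) * ((|1 - l| : ℝ) : ℂ) ^ (-z)) volume 0 1 :=
  (betaIntegral_convergent (v := 1 - z) hw (by simpa using hz)).congr_uIoo <| by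
    simpa only [uIoo_of_le zero_le_one] using eqOn_betaIntegrand_cpow_mul_abs_one_sub_cpow w z

theorem integrableOn_Ioi_one_cpow_mul_abs_one_sub_cpow (hwz : w.re < z.re) (hz : z.re < 1) :
    IntegrableOn (fun l : ℝ ↦ (l : ℂ) ^ (w - 1) * ((|1 - l| : ℝ) : ℂ) ^ (-z)) (Ioi (1 : ℝ)) := by
  rw [integrableOn_Ioi_one_iff_intervalIntegrable_comp_inv]
  refine (betaIntegral_convergent (u := z - w) (v := 1 - z) (by simpa using hwz)
    (by simpa using hz)).congr_uIoo ?_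
  simpa only [uIoo_of_le zero_le_one] using
    eqOn_betaIntegrand_inv_sq_smul_cpow_mul_abs_one_sub_cpow w z

end AbsOneSubKernel

/-- For `0 < Re w < Re z < 1`,
`∫₀^∞ λ^{w-1} |1-λ|^{-z} dλ = Γ(w)Γ(1-z)/Γ(1+w-z) + Γ(z-w)Γ(1-z)/Γ(1-w)`. -/
theorem stmt_0 (w z : ℂ) (h0 : 0 < w.re) (h1 : w.re < z.re) (h2 : z.re < 1) :
    ∫ l in Set.Ioi (0 : ℝ), (l : ℂ) ^ (w - 1) * ((|1 - l| : ℝ) : ℂ) ^ (-z) =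
      Gamma w * Gamma (1 - z) / Gamma (1 + w - z) +
        Gamma (z - w) * Gamma (1 - z) / Gamma (1 - w) := by
  rw [← intervalIntegral.integral_interval_add_Ioi'
      (intervalIntegrable_cpow_mul_abs_one_sub_cpow h0 h2)
      (integrableOn_Ioi_one_cpow_mul_abs_one_sub_cpow h1 h2),
    intervalIntegral_cpow_mul_abs_one_sub_cpow, integral_Ioi_one_cpow_mul_abs_one_sub_cpow,
    betaIntegral_eq_Gamma_mul_div _ _ h0 (by simpa using h2),
    betaIntegral_eq_Gamma_mul_div _ _ (by simpa using h1) (by simpa using h2),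
    show w + (1 - z) = 1 + w - z by ring, show z - w + (1 - z) = 1 - w by ring]
end

section
/- For 0 < Re(w) < Re(z) < 1, one has the identity Γ(w)Γ(1-z)/Γ(1+w-z) + Γ(z-w)Γ(1-z)/Γ(1-w) + Γ(z-w)Γ(w)/Γ(z) = 2^z sin(πz/2) Γ(1-z) · [Γ(w/2)Γ((z-w)/2)] / [Γ((1-w)/2)Γ((1-z+w)/2)]. -/
/-!
By the reflection formula, the three quotients on the left are `Γ(w)Γ(z-w)Γ(1-z)/π` times
`sin π(z-w)`, `sin πw` and `sin πz`. On the right, Legendre's duplication formula combined with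
reflection gives `Γ(s/2)/Γ((1-s)/2) = 2^(1-s) Γ(s) cos(πs/2)/√π` for `s = w` and `s = z-w`.
The identity then reduces to `sin 2a + sin 2b + sin 2(a+b) = 4 sin(a+b) cos a cos b`
with `a = πw/2`, `b = π(z-w)/2`.
-/

open Complex

open scoped Real

namespace Complex

theorem ofReal_sqrt_pi_mul_self : (√π : ℂ) * √π = π := by
  exact_mod_cast Real.mul_self_sqrt Real.pi_pos.le

theorem inv_Gamma_one_sub {s : ℂ} (hs : Gamma s ≠ 0) :
    (Gamma (1 - s))⁻¹ = Gamma s * sin (π * s) / π := by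
  rw [← div_mul_cancel_left₀ hs, Gamma_mul_Gamma_one_sub, div_div_eq_mul_div]

theorem Gamma_half_div_Gamma_one_sub_half {s : ℂ} (hs : Gamma ((1 + s) / 2) ≠ 0) :
    Gamma (s / 2) / Gamma ((1 - s) / 2) = 2 ^ (1 - s) * Gamma s * cos (π * s / 2) / √π := by
  have duplication : Gamma (s / 2) * Gamma ((1 + s) / 2) = 2 ^ (1 - s) * √π * Gamma s := by
    have := Gamma_mul_Gamma_add_half (s / 2)
    rw [show s / 2 + 1 / 2 = (1 + s) / 2 by ring, mul_div_cancel₀ s two_ne_zero] at this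
    rw [this]; ring
  have reflection : Gamma ((1 - s) / 2) * Gamma ((1 + s) / 2) = π / cos (π * s / 2) := by
    have := Gamma_mul_Gamma_one_sub ((1 + s) / 2)
    rw [show (π : ℂ) * ((1 + s) / 2) = π / 2 - -(π * s / 2) by ring, sin_pi_div_two_sub, cos_neg,
      show 1 - (1 + s) / 2 = (1 - s) / 2 by ring] at this
    rw [mul_comm, this]
  have sqrt_pi_ne : (√π : ℂ) ≠ 0 := ofReal_ne_zero.mpr (Real.sqrt_ne_zero'.mpr Real.pi_pos)
  rw [← mul_div_mul_right _ _ hs, duplication, reflection, div_div_eq_mul_div,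
    ← ofReal_sqrt_pi_mul_self]
  field_simp

theorem two_cpow_add_mul_Gamma_half_ratio {a b : ℂ} (ha : Gamma ((1 + a) / 2) ≠ 0)
    (hb : Gamma ((1 + b) / 2) ≠ 0) :
    2 ^ (a + b) * (Gamma (a / 2) * Gamma (b / 2) / (Gamma ((1 - a) / 2) * Gamma ((1 - b) / 2))) =
      4 * Gamma a * Gamma b * cos (π * a / 2) * cos (π * b / 2) / π := by
  have two_cpow : (2 : ℂ) ^ (a + b) * 2 ^ (1 - a) * 2 ^ (1 - b) = 4 := by
    rw [← cpow_add _ _ two_ne_zero, ← cpow_add _ _ two_ne_zero,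
      show a + b + (1 - a) + (1 - b) = 2 by ring]
    norm_num
  have sqrt_pi_ne : (√π : ℂ) ≠ 0 := ofReal_ne_zero.mpr (Real.sqrt_ne_zero'.mpr Real.pi_pos)
  rw [mul_div_mul_comm, Gamma_half_div_Gamma_one_sub_half ha, Gamma_half_div_Gamma_one_sub_half hb,
    ← ofReal_sqrt_pi_mul_self, ← two_cpow]
  field_simp

theorem four_mul_sin_add_mul_cos_mul_cos (a b : ℂ) :
    4 * sin (a + b) * cos a * cos b = sin (2 * a) + sin (2 * b) + sin (2 * (a + b)) := by
  rw [sin_two_mul, sin_two_mul, sin_two_mul, sin_add, cos_add]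
  linear_combination (2 * sin a * cos a) * sin_sq_add_cos_sq b +
    (2 * sin b * cos b) * sin_sq_add_cos_sq a

end Complex

/-- Matt Young's Gamma-ratio identity, for `0 < Re w < Re z < 1`. -/
theorem stmt_2 (w z : ℂ) (h0 : 0 < w.re) (h1 : w.re < z.re) (h2 : z.re < 1) :
    Gamma w * Gamma (1 - z) / Gamma (1 + w - z) +
      Gamma (z - w) * Gamma (1 - z) / Gamma (1 - w) +
      Gamma (z - w) * Gamma w / Gamma z =
    (2 : ℂ) ^ z * Complex.sin (Real.pi * z / 2) * Gamma (1 - z) *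
      (Gamma (w / 2) * Gamma ((z - w) / 2)) /
      (Gamma ((1 - w) / 2) * Gamma ((1 - z + w) / 2)) := by
  have hzw : 0 < (z - w).re := by rw [sub_re]; linarith
  have h1z : 0 < (1 - z).re := by rw [sub_re, one_re]; linarith
  have Gamma_half_ne {s : ℂ} (hs : 0 < s.re) : Gamma ((1 + s) / 2) ≠ 0 :=
    Gamma_ne_zero_of_re_pos (by rw [div_ofNat_re, add_re, one_re]; positivity)
  have inv_Gamma_z := inv_Gamma_one_sub (Gamma_ne_zero_of_re_pos h1z)
  rw [sub_sub_cancel, mul_sub, mul_one, sin_pi_sub] at inv_Gamma_z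
  have half_ratio := two_cpow_add_mul_Gamma_half_ratio (Gamma_half_ne h0) (Gamma_half_ne hzw)
  rw [add_sub_cancel] at half_ratio
  have trig := four_mul_sin_add_mul_cos_mul_cos (π * w / 2) (π * (z - w) / 2)
  rw [show π * w / 2 + π * (z - w) / 2 = π * z / 2 by ring, mul_div_cancel₀ _ two_ne_zero,
    mul_div_cancel₀ _ two_ne_zero, mul_div_cancel₀ _ two_ne_zero] at trig
  rw [div_eq_mul_inv, div_eq_mul_inv (_ * _) (Gamma (1 - w)), div_eq_mul_inv (_ * _) (Gamma z),
    show 1 + w - z = 1 - (z - w) by ring, show 1 - z + w = 1 - (z - w) by ring,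
    inv_Gamma_one_sub (Gamma_ne_zero_of_re_pos hzw), inv_Gamma_one_sub (Gamma_ne_zero_of_re_pos h0),
    inv_Gamma_z, mul_div_assoc _ (_ * _)]
  linear_combination (-(Gamma w * Gamma (1 - z) * Gamma (z - w) / π)) * trig
    - sin (π * z / 2) * Gamma (1 - z) * half_ratio
end

section
/- Let q > 1 and let m, n be positive integers with gcd(mn, q) = 1. Then the sum over even primitive Dirichlet characters χ mod q of χ(m)·conj(χ)(n) equals (1/2)·∑_{dr = q, r | m-n or r | m+n} μ(d)φ(r), where in the inner sum each r dividing both m-n and m+n is counted twice. -/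
open Complex DirichletCharacter
open scoped Classical ComplexConjugate

/-!
Write `P_r(a, b)` (`primitiveSum r a b`) for the sum of `ψ(a) conj(ψ(b))` over the primitive
characters `ψ` mod `r`.
Every character mod `s` is induced by a unique primitive character, of level its conductor
`r ∣ s`, and induction does not change the values at units. Hence orthogonality
`∑_χ χ(a) conj(χ(b)) = φ(s) [s ∣ a - b]` reads `∑_{r ∣ s} P_r(a, b) = φ(s) [s ∣ a - b]`,
and Möbius inversion gives `P_q(a, b) = ∑_{dr = q} μ(d) φ(r) [r ∣ a - b]`. Finally the indicator of
`χ(-1) = 1` is `(1 + χ(-1)) / 2` and `χ(-1) χ(m) = χ(-m)`, so the sum over even primitive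
characters is `(P_q(m, n) + P_q(-m, n)) / 2`.
-/

namespace DirichletCharacter

lemma conj_apply_intCast {r : ℕ} (χ : DirichletCharacter ℂ r) {b : ℤ} (hb : IsCoprime b r) :
    conj (χ b) = χ (b : ZMod r)⁻¹ := by
  rw [← ZMod.coe_unitOfIsCoprime b hb, ZMod.inv_coe_unit, ← Ring.inverse_unit,
    ← MulChar.inv_apply, ← MulChar.star_apply', Complex.star_def]

theorem sum_mul_conj_eq (r : ℕ) [NeZero r] (a : ℤ) {b : ℤ} (hb : IsCoprime b r) :
    ∑ χ : DirichletCharacter ℂ r, χ a * conj (χ b) =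
      if (r : ℤ) ∣ a - b then (r.totient : ℂ) else 0 := by
  have hbu : IsUnit (b : ZMod r) := ZMod.coe_unitOfIsCoprime b hb ▸ Units.isUnit _
  rw [Finset.sum_congr rfl fun χ _ => by rw [conj_apply_intCast χ hb, mul_comm],
    sum_char_inv_mul_char_eq ℂ hbu]
  simp only [ZMod.intCast_eq_intCast_iff_dvd_sub]

lemma ite_apply_neg_one_eq_one {R : Type*} [Field R] [NeZero (2 : R)] {q : ℕ}
    (χ : DirichletCharacter R q) (a : ZMod q) :
    (if χ (-1) = 1 then χ a else 0) = (χ a + χ (-a)) / 2 := by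
  rcases χ.even_or_odd with hχ | hχ
  · rw [if_pos (show χ (-1) = 1 from hχ), hχ.eval_neg, add_self_div_two]
  · have hne : χ (-1) ≠ 1 := by
      rw [hχ]
      intro h
      exact two_ne_zero (by linear_combination -h : (2 : R) = 0)
    rw [if_neg hne, hχ.eval_neg]
    ring

noncomputable def primitiveSum (r : ℕ) (a b : ℤ) : ℂ :=
  ∑ ψ : DirichletCharacter ℂ r with ψ.IsPrimitive, ψ a * conj (ψ b)

theorem sum_mul_conj_eq_sum_divisors_primitiveSum (s : ℕ) [NeZero s] {a b : ℤ}
    (ha : IsCoprime a s) (hb : IsCoprime b s) :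
    ∑ χ : DirichletCharacter ℂ s, χ a * conj (χ b) = ∑ r ∈ s.divisors, primitiveSum r a b := by
  rw [← Finset.sum_fiberwise_of_maps_to (g := conductor)
    fun χ _ => Nat.mem_divisors.mpr ⟨conductor_dvd_level χ, NeZero.ne s⟩]
  refine Finset.sum_congr rfl fun r hr => ?_
  have hrs : r ∣ s := Nat.dvd_of_mem_divisors hr
  refine (Finset.sum_bij (fun ψ _ => changeLevel hrs ψ) ?_ ?_ ?_ ?_).symm
  · intro ψ hψ
    simp only [Finset.mem_filter, Finset.mem_univ, true_and] at hψ ⊢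
    rw [conductor_changeLevel, hψ]
  · exact fun ψ₁ _ ψ₂ _ h => changeLevel_injective hrs h
  · intro χ hχ
    simp only [Finset.mem_filter, Finset.mem_univ, true_and] at hχ
    subst hχ
    refine ⟨χ.primitiveCharacter, ?_, changeLevel_primitiveCharacter χ⟩
    simpa only [Finset.mem_filter, Finset.mem_univ, true_and] using
      χ.primitiveCharacter_isPrimitive
  · intro ψ _
    rw [changeLevel_eq_cast_of_dvd' ψ hrs ha, changeLevel_eq_cast_of_dvd' ψ hrs hb]

theorem primitiveSum_eq_sum_moebius (q : ℕ) [NeZero q] {a b : ℤ} (ha : IsCoprime a q)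
    (hb : IsCoprime b q) :
    primitiveSum q a b = ∑ d ∈ q.divisors, (ArithmeticFunction.moebius d : ℂ) *
      if ((q / d : ℕ) : ℤ) ∣ a - b then ((q / d).totient : ℂ) else 0 := by
  have inversion := (ArithmeticFunction.sum_eq_iff_sum_mul_moebius_eq_on
      (f := fun t => primitiveSum t a b)
      (g := fun t => if (t : ℤ) ∣ a - b then (t.totient : ℂ) else 0)
      {t | t ∣ q} (fun _ _ hxy hy => hxy.trans hy)).mp ?_ q (NeZero.pos q) dvd_rfl
  · rw [← inversion, Nat.sum_divisorsAntidiagonal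
      (fun d e => (ArithmeticFunction.moebius d : ℂ) *
        if (e : ℤ) ∣ a - b then (e.totient : ℂ) else 0)]
  · intro t ht htq
    have : NeZero t := ⟨ht.ne'⟩
    have htq' : (t : ℤ) ∣ q := Int.natCast_dvd_natCast.mpr htq
    rw [← sum_mul_conj_eq_sum_divisors_primitiveSum t (ha.of_isCoprime_of_dvd_right htq')
      (hb.of_isCoprime_of_dvd_right htq'),
      sum_mul_conj_eq t a (hb.of_isCoprime_of_dvd_right htq')]

theorem sum_even_primitive_mul_conj_eq (q : ℕ) [NeZero q] (a b : ℤ) :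
    ∑ χ : DirichletCharacter ℂ q,
        (if χ.IsPrimitive ∧ χ (-1) = 1 then χ a * conj (χ b) else 0) =
      (primitiveSum q a b + primitiveSum q (-a) b) / 2 := by
  rw [primitiveSum, primitiveSum, Finset.sum_filter, Finset.sum_filter, ← Finset.sum_add_distrib,
    Finset.sum_div]
  refine Finset.sum_congr rfl fun χ _ => ?_
  rw [ite_and, ← ite_zero_mul, ite_apply_neg_one_eq_one, Int.cast_neg]
  split_ifs <;> ring

end DirichletCharacter

theorem stmt_3_general (q m n : ℕ) [NeZero q]
    (hco : Nat.Coprime (m * n) q) :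
    (∑ χ : DirichletCharacter ℂ q,
        if χ.IsPrimitive ∧ χ (-1) = 1 then
          χ (m : ZMod q) * (starRingEnd ℂ) (χ (n : ZMod q)) else 0) =
    (1 / 2 : ℂ) * ∑ d ∈ q.divisors,
      (ArithmeticFunction.moebius d : ℂ) * (Nat.totient (q / d) : ℂ) *
        ((if ((q / d : ℕ) : ℤ) ∣ ((m : ℤ) - n) then 1 else 0) +
          (if ((q / d : ℕ) : ℤ) ∣ ((m : ℤ) + n) then 1 else 0)) := by
  have hmq : IsCoprime (m : ℤ) q := Nat.isCoprime_iff_coprime.mpr hco.coprime_mul_right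
  have hnq : IsCoprime (n : ℤ) q := Nat.isCoprime_iff_coprime.mpr hco.coprime_mul_left
  have key := sum_even_primitive_mul_conj_eq q m n
  simp only [Int.cast_natCast] at key
  rw [key, primitiveSum_eq_sum_moebius q hmq hnq,
    primitiveSum_eq_sum_moebius q hmq.neg_left hnq, ← Finset.sum_add_distrib, one_div_mul_eq_div]
  congr 1
  refine Finset.sum_congr rfl fun d _ => ?_
  simp only [show -(m : ℤ) - n = -(m + n) by ring, Int.dvd_neg]
  split_ifs <;> ring

/-- Orthogonality for even primitive characters: for `q > 1` and `gcd(mn,q) = 1`,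
`∑_{χ mod q even primitive} χ(m) conj(χ(n))
  = (1/2) ∑_{dr = q, r | m±n} μ(d) φ(r)`,
where an `r` dividing both `m - n` and `m + n` is counted twice. -/
theorem stmt_3 (q m n : ℕ) [NeZero q] (hq : 1 < q) (hm : 0 < m) (hn : 0 < n)
    (hco : Nat.Coprime (m * n) q) :
    (∑ χ : DirichletCharacter ℂ q,
        if χ.IsPrimitive ∧ χ (-1) = 1 then
          χ (m : ZMod q) * (starRingEnd ℂ) (χ (n : ZMod q)) else 0) =
    (1 / 2 : ℂ) * ∑ d ∈ q.divisors,
      (ArithmeticFunction.moebius d : ℂ) * (Nat.totient (q / d) : ℂ) *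
        ((if ((q / d : ℕ) : ℤ) ∣ ((m : ℤ) - n) then 1 else 0) +
          (if ((q / d : ℕ) : ℤ) ∣ ((m : ℤ) + n) then 1 else 0)) :=
  stmt_3_general q m n hco
end

section
/- For every positive integer q, ∑_{dr = q} μ(d)φ(r) equals the number of primitive Dirichlet characters mod q. -/
/-!
Every Dirichlet character mod `q` is induced by a unique primitive character, whose level is its
conductor, a divisor of `q`. Counting characters by conductor gives
`∑_{d ∣ q} #{primitive characters mod d} = φ(q)`, and Möbius inversion yields the theorem.
-/

open DirichletCharacter

namespace DirichletCharacter

variable {R : Type*} [CommMonoidWithZero R] {n d : ℕ} [NeZero n]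

lemma conductor_changeLevel_of_isPrimitive (hd : d ∣ n) {ψ : DirichletCharacter R d}
    (hψ : ψ.IsPrimitive) : (changeLevel hd ψ).conductor = d :=
  (conductor_changeLevel ψ hd).trans hψ

noncomputable def isPrimitiveEquivConductorEq (hd : d ∣ n) :
    {ψ : DirichletCharacter R d // ψ.IsPrimitive} ≃
      {χ : DirichletCharacter R n // χ.conductor = d} :=
  Equiv.ofBijective (fun ψ ↦ ⟨changeLevel hd ψ.1, conductor_changeLevel_of_isPrimitive hd ψ.2⟩)
    ⟨fun _ _ h ↦ Subtype.ext (changeLevel_injective hd (congrArg Subtype.val h)), by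
      rintro ⟨χ, rfl⟩
      exact ⟨⟨χ.primitiveCharacter, χ.primitiveCharacter_isPrimitive⟩,
        Subtype.ext χ.changeLevel_primitiveCharacter⟩⟩

end DirichletCharacter

theorem sum_card_isPrimitive_eq_totient (F : Type*) [Field F] [IsSepClosed F] [CharZero F]
    {n : ℕ} (hn : 0 < n) :
    ∑ d ∈ n.divisors, Nat.card {ψ : DirichletCharacter F d // ψ.IsPrimitive} = n.totient := by
  have : NeZero n := ⟨hn.ne'⟩
  classical
  rw [← card_eq_totient_of_hasEnoughRootsOfUnity F n, Nat.card_eq_fintype_card,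
    ← Finset.card_univ, Finset.card_eq_sum_card_fiberwise (f := conductor) (t := n.divisors)
      fun χ _ ↦ Nat.mem_divisors.mpr ⟨χ.conductor_dvd_level, hn.ne'⟩]
  refine Finset.sum_congr rfl fun d hd ↦ ?_
  rw [Nat.card_congr (isPrimitiveEquivConductorEq (Nat.dvd_of_mem_divisors hd)),
    Nat.card_eq_fintype_card, Fintype.card_subtype]

/-- `∑_{dr = q} μ(d) φ(r)` equals the number of primitive Dirichlet characters mod `q`. -/
theorem stmt_4 (q : ℕ) (hq : 0 < q) :
    (∑ d ∈ q.divisors, (ArithmeticFunction.moebius d) * (Nat.totient (q / d) : ℤ)) =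
      Nat.card {χ : DirichletCharacter ℂ q // χ.IsPrimitive} := by
  have inversion := ArithmeticFunction.sum_eq_iff_sum_mul_moebius_eq
    (f := fun d ↦ (Nat.card {ψ : DirichletCharacter ℂ d // ψ.IsPrimitive} : ℤ))
    (g := fun n ↦ (n.totient : ℤ))
  rw [← inversion.mp (fun n hn ↦ mod_cast sum_card_isPrimitive_eq_totient ℂ hn) q hq,
    ← Nat.sum_divisorsAntidiagonal fun d r ↦ (ArithmeticFunction.moebius d : ℤ) * r.totient]
  simp only [Int.cast_id]
end

section
/- Let A and B be finite multisets of complex numbers all of whose elements have real part greater than 0, and let p be a prime. Then ∑_{g=0}^∞ σ_{-A}(p^g)σ_{-B}(p^g)/p^g = ∫₀^1 ∏_{α∈A} (1 - e(θ)/p^{1/2+α})^{-1} ∏_{β∈B} (1 - e(-θ)/p^{1/2+β})^{-1} dθ, where e(θ) = exp(2πiθ). -/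
open Complex

/-- The generalized divisor function `σ_A(n)` for `A = [s₁,…,s_R]` a list of complex
exponents. -/
noncomputable def dsigma : List ℂ → ℕ → ℂ
  | [], n => if n = 1 then 1 else 0
  | s :: A, n => ∑ d ∈ n.divisors, (d : ℂ) ^ s * dsigma A (n / d)

/-!
Expanding each factor as a geometric series and multiplying out (a Cauchy product along
the list), `∏_{α ∈ A} (1 - y p^{-α})⁻¹ = ∑_g σ_{-A}(p^g) y^g` whenever `‖y‖ ≤ 1`. Taking
`y = e(±θ) p^{-1/2}`, the integrand is the product of two absolutely convergent Fourier series
`∑ a_m e(mθ)` and `∑ b_n e(-nθ)` with `a_g b_g = σ_{-A}(p^g) σ_{-B}(p^g) / p^g`; integrating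
termwise over `[0, 1]`, orthogonality of the characters `e(kθ)` leaves only the diagonal `m = n`.
-/

open Finset

section GeneratingFunction

variable {p : ℕ}

lemma dsigma_nil_prime_pow_mul_pow (hp : p.Prime) (y : ℂ) (g : ℕ) :
    dsigma [] (p ^ g) * y ^ g = if g = 0 then 1 else 0 := by
  split_ifs with hg <;> simp [dsigma, hg, hp.ne_one]

lemma dsigma_cons_prime_pow (hp : p.Prime) (s : ℂ) (L : List ℂ) (g : ℕ) :
    dsigma (s :: L) (p ^ g) =
      ∑ kl ∈ antidiagonal g, ((p : ℂ) ^ s) ^ kl.1 * dsigma L (p ^ kl.2) := by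
  rw [dsigma, Nat.sum_divisors_prime_pow hp, Nat.sum_antidiagonal_eq_sum_range_succ_mk]
  refine sum_congr rfl fun j hj => ?_
  rw [Nat.pow_div (Nat.le_of_lt_succ (mem_range.1 hj)) hp.pos]
  push_cast
  rw [← natCast_cpow_natCast_mul, cpow_nat_mul]

lemma dsigma_cons_prime_pow_mul_pow (hp : p.Prime) (s : ℂ) (L : List ℂ) (y : ℂ) (g : ℕ) :
    dsigma (s :: L) (p ^ g) * y ^ g =
      ∑ kl ∈ antidiagonal g, (y * (p : ℂ) ^ s) ^ kl.1 * (dsigma L (p ^ kl.2) * y ^ kl.2) := by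
  rw [dsigma_cons_prime_pow hp, sum_mul]
  refine sum_congr rfl fun kl hkl => ?_
  rw [← mem_antidiagonal.1 hkl, pow_add, mul_pow]
  ring

lemma summable_norm_dsigma_prime_pow_mul_pow (hp : p.Prime) {y : ℂ} (L : List ℂ)
    (hL : ∀ s ∈ L, ‖y * (p : ℂ) ^ s‖ < 1) :
    Summable fun g => ‖dsigma L (p ^ g) * y ^ g‖ := by
  induction L with
  | nil =>
    simp_rw [dsigma_nil_prime_pow_mul_pow hp]
    exact summable_of_ne_finset_zero (s := {0}) fun g hg => by
      rw [if_neg (by simpa using hg), norm_zero]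
  | cons s L ih =>
    simp_rw [dsigma_cons_prime_pow_mul_pow hp]
    exact summable_norm_sum_mul_antidiagonal_of_summable_norm
      (f := fun k => (y * (p : ℂ) ^ s) ^ k) (g := fun l => dsigma L (p ^ l) * y ^ l)
      (summable_norm_geometric_of_norm_lt_one (hL s List.mem_cons_self))
      (ih fun t ht => hL t (List.mem_cons_of_mem s ht))

theorem tsum_dsigma_prime_pow_mul_pow (hp : p.Prime) {y : ℂ} (L : List ℂ)
    (hL : ∀ s ∈ L, ‖y * (p : ℂ) ^ s‖ < 1) :
    ∑' g, dsigma L (p ^ g) * y ^ g = (L.map fun s => (1 - y * (p : ℂ) ^ s)⁻¹).prod := by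
  induction L with
  | nil => simp [dsigma_nil_prime_pow_mul_pow hp]
  | cons s L ih =>
    have hs := hL s List.mem_cons_self
    have hL' : ∀ t ∈ L, ‖y * (p : ℂ) ^ t‖ < 1 := fun t ht =>
      hL t (List.mem_cons_of_mem s ht)
    simp_rw [dsigma_cons_prime_pow_mul_pow hp]
    rw [← tsum_mul_tsum_eq_tsum_sum_antidiagonal_of_summable_norm
        (summable_norm_geometric_of_norm_lt_one hs)
        (summable_norm_dsigma_prime_pow_mul_pow hp L hL'),
      tsum_geometric_of_norm_lt_one hs, ih hL', List.map_cons, List.prod_cons]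

lemma norm_mul_natCast_cpow_neg_lt_one (hp : 1 < p) {y α : ℂ} (hy : ‖y‖ ≤ 1)
    (hα : 0 < α.re) : ‖y * (p : ℂ) ^ (-α)‖ < 1 := by
  rw [norm_mul, norm_natCast_cpow_of_pos (by omega)]
  refine mul_lt_one_of_nonneg_of_lt_one_right hy (by positivity) ?_
  exact Real.rpow_lt_one_of_one_lt_of_neg (by exact_mod_cast hp) (by simpa using hα)

lemma norm_natCast_cpow_neg_half_le_one (hp : 1 ≤ p) :
    ‖(p : ℂ) ^ (-((1 : ℂ) / 2))‖ ≤ 1 := by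
  rw [norm_natCast_cpow_of_pos (by omega)]
  exact Real.rpow_le_one_of_one_le_of_nonpos (by exact_mod_cast hp) (by norm_num)

theorem prod_inv_one_sub_div_cpow_half_add (hp : p.Prime) {A : List ℂ}
    (hA : ∀ α ∈ A, 0 < α.re) {z : ℂ} (hz : ‖z‖ ≤ 1) :
    (A.map fun α => (1 - z / (p : ℂ) ^ ((1 : ℂ) / 2 + α))⁻¹).prod =
      ∑' g, dsigma (A.map Neg.neg) (p ^ g) * ((p : ℂ) ^ (-((1 : ℂ) / 2))) ^ g * z ^ g := by
  have hp0 : (p : ℂ) ≠ 0 := Nat.cast_ne_zero.2 hp.ne_zero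
  have hy : ‖z * (p : ℂ) ^ (-((1 : ℂ) / 2))‖ ≤ 1 := by
    rw [norm_mul]
    exact mul_le_one₀ hz (norm_nonneg _) (norm_natCast_cpow_neg_half_le_one hp.one_le)
  simp_rw [mul_assoc, ← mul_pow, mul_comm _ z,
    tsum_dsigma_prime_pow_mul_pow hp _ (List.forall_mem_map.2 fun α hα =>
      norm_mul_natCast_cpow_neg_lt_one hp.one_lt hy (hA α hα)),
    List.map_map]
  congr 1
  refine List.map_congr_left fun α _ => ?_
  simp only [Function.comp_apply]
  rw [div_eq_mul_inv, ← cpow_neg, neg_add, cpow_add _ _ hp0, mul_assoc]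

end GeneratingFunction

section Orthogonality

open scoped Real

lemma norm_exp_two_pi_I_mul (θ : ℝ) : ‖exp (2 * π * I * θ)‖ = 1 := by
  simp [norm_exp]

lemma norm_exp_neg_two_pi_I_mul (θ : ℝ) : ‖exp (-(2 * π * I * θ))‖ = 1 := by
  rw [exp_neg, norm_inv, norm_exp_two_pi_I_mul, inv_one]

lemma integral_exp_int_mul_two_pi_I_mul (k : ℤ) :
    ∫ θ in (0 : ℝ)..1, exp (k * (2 * π * I) * θ) = if k = 0 then 1 else 0 := by
  split_ifs with hk
  · simp [hk]
  · have hc : (k : ℂ) * (2 * π * I) ≠ 0 := by simp [hk, Real.pi_ne_zero, I_ne_zero]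
    rw [integral_exp_mul_complex hc]
    simp [exp_int_mul_two_pi_mul_I]

lemma integral_exp_pow_mul_exp_neg_pow (m n : ℕ) :
    ∫ θ in (0 : ℝ)..1, exp (2 * π * I * θ) ^ m * exp (-(2 * π * I * θ)) ^ n =
      if m = n then 1 else 0 := by
  have h : ∀ θ : ℝ, exp (2 * π * I * θ) ^ m * exp (-(2 * π * I * θ)) ^ n =
      exp (((m - n : ℤ) : ℂ) * (2 * π * I) * θ) := fun θ => by
    rw [← exp_nat_mul, ← exp_nat_mul, ← exp_add]
    push_cast
    ring_nf
  simp_rw [h, integral_exp_int_mul_two_pi_I_mul, sub_eq_zero, Nat.cast_inj]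

theorem integral_tsum_mul_tsum_eq_tsum_mul {a b : ℕ → ℂ} (ha : Summable (‖a ·‖))
    (hb : Summable (‖b ·‖)) :
    ∫ θ in (0 : ℝ)..1, (∑' m, a m * exp (2 * π * I * θ) ^ m) *
      ∑' n, b n * exp (-(2 * π * I * θ)) ^ n = ∑' n, a n * b n := by
  let F : ℕ × ℕ → C(ℝ, ℂ) := fun z =>
    ⟨fun θ => a z.1 * exp (2 * π * I * θ) ^ z.1 * (b z.2 * exp (-(2 * π * I * θ)) ^ z.2),
      by fun_prop⟩
  have hF : ∀ z θ, ‖F z θ‖ = ‖a z.1‖ * ‖b z.2‖ := fun z θ => by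
    simp [F, norm_exp_two_pi_I_mul, norm_exp_neg_two_pi_I_mul]
  have hFsum : Summable fun z =>
      ‖(F z).restrict (⟨Set.uIcc 0 1, isCompact_uIcc⟩ : TopologicalSpace.Compacts ℝ)‖ :=
    (ha.mul_of_nonneg hb (fun _ => norm_nonneg _) fun _ => norm_nonneg _).of_nonneg_of_le
      (fun _ => norm_nonneg _) fun z =>
        (ContinuousMap.norm_le _ (by positivity)).2 fun θ => (hF z θ).le
  have hdiag : Function.support (fun z : ℕ × ℕ => if z.1 = z.2 then a z.1 * b z.2 else 0) ⊆
      Set.range fun n => (n, n) := by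
    intro z hz
    by_cases h : z.1 = z.2
    · exact ⟨z.1, Prod.ext rfl h⟩
    · simp [h] at hz
  calc _ = ∫ θ in (0 : ℝ)..1, ∑' z, F z θ := intervalIntegral.integral_congr fun θ _ =>
        tsum_mul_tsum_of_summable_norm
          (by simpa [norm_exp_two_pi_I_mul] using ha)
          (by simpa [norm_exp_neg_two_pi_I_mul] using hb)
    _ = ∑' z : ℕ × ℕ, if z.1 = z.2 then a z.1 * b z.2 else 0 := by
      rw [← intervalIntegral.tsum_intervalIntegral_eq_of_summable_norm hFsum]
      refine tsum_congr fun z => ?_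
      simp only [F, ContinuousMap.coe_mk, mul_mul_mul_comm (a z.1),
        intervalIntegral.integral_const_mul, integral_exp_pow_mul_exp_neg_pow, mul_ite, mul_one,
        mul_zero]
    _ = ∑' n, a n * b n := by
      have hinj : Function.Injective fun n : ℕ => (n, n) := fun m n h => (Prod.ext_iff.1 h).1
      rw [← hinj.tsum_eq hdiag]
      simp

end Orthogonality

/-- `∑_{g≥0} σ_{-A}(p^g) σ_{-B}(p^g) p^{-g}
  = ∫₀^1 ∏_{α∈A} (1 - e(θ)/p^{1/2+α})⁻¹ ∏_{β∈B} (1 - e(-θ)/p^{1/2+β})⁻¹ dθ`,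
for `A`, `B` with entries of positive real part and `p` prime, where `e(θ) = exp(2πiθ)`. -/
theorem stmt_6 (A B : List ℂ) (hA : ∀ α ∈ A, 0 < α.re) (hB : ∀ β ∈ B, 0 < β.re)
    (p : ℕ) (hp : p.Prime) :
    (∑' g : ℕ, dsigma (A.map Neg.neg) (p ^ g) * dsigma (B.map Neg.neg) (p ^ g) / (p : ℂ) ^ g) =
    ∫ θ in (0:ℝ)..1,
      (A.map (fun α =>
          (1 - Complex.exp (2 * Real.pi * I * θ) / (p : ℂ) ^ ((1 : ℂ) / 2 + α))⁻¹)).prod *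
      (B.map (fun β =>
          (1 - Complex.exp (-(2 * Real.pi * I * θ)) / (p : ℂ) ^ ((1 : ℂ) / 2 + β))⁻¹)).prod := by
  set q : ℂ := (p : ℂ) ^ (-((1 : ℂ) / 2))
  have hq : ‖q‖ ≤ 1 := norm_natCast_cpow_neg_half_le_one hp.one_le
  have hqq : q * q = (p : ℂ)⁻¹ := by
    rw [← cpow_add _ _ (Nat.cast_ne_zero.2 hp.ne_zero), ← neg_add, add_halves, cpow_neg_one]
  have ha := summable_norm_dsigma_prime_pow_mul_pow hp (A.map Neg.neg) (List.forall_mem_map.2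
    fun α hα => norm_mul_natCast_cpow_neg_lt_one hp.one_lt hq (hA α hα))
  have hb := summable_norm_dsigma_prime_pow_mul_pow hp (B.map Neg.neg) (List.forall_mem_map.2
    fun β hβ => norm_mul_natCast_cpow_neg_lt_one hp.one_lt hq (hB β hβ))
  calc _ = ∑' g, dsigma (A.map Neg.neg) (p ^ g) * q ^ g *
        (dsigma (B.map Neg.neg) (p ^ g) * q ^ g) :=
        tsum_congr fun g => by rw [div_eq_mul_inv, ← inv_pow, ← hqq, mul_pow]; ring
    _ = _ := (integral_tsum_mul_tsum_eq_tsum_mul ha hb).symm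
    _ = _ := intervalIntegral.integral_congr fun θ _ => by
        rw [prod_inv_one_sub_div_cpow_half_add hp hA (norm_exp_two_pi_I_mul θ).le,
          prod_inv_one_sub_div_cpow_half_add hp hB (norm_exp_neg_two_pi_I_mul θ).le]
end

section
/- Suppose C(X) = ∑ c_n X^n = ∏_{j=1}^J (1-γ_j X)^{-1} and D(X) = ∑ d_n X^n = ∏_{k=1}^K (1-δ_k X)^{-1} as formal power series (or convergent series for small X), and let E(X) = ∑_g c_g d_g X^g. Define C̃(X) = C(X)(1-γ₁X)/(1-X/δ₁), D̃(X) = D(X)(1-δ₁X)/(1-X/γ₁), with coefficients c̃_n, d̃_n, and Ẽ(X) = ∑_g c̃_g d̃_g X^g. Further set E_c(X) = ∑_{g,m≥0} c_{g+m} d_g X^{g+m} γ₁^{-m} and E_d(X) = ∑_{g,n≥0} c_g d_{g+n} X^{g+n} δ₁^{-n}. Then Ẽ(X)·(1 - X/(γ₁δ₁)) = (1-X)(1-γ₁δ₁)(E_c(X)+E_d(X)) + (-1 + (2-X)γ₁δ₁)·E(X). -/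
/-!
Write `C = T (1 - X/δ₁)` and `D = S (1 - X/γ₁)`. Then `C̃ = T (1 - γ₁X)`, `D̃ = S (1 - δ₁X)`,
`E_c = C ⊙ (D (1 - X/γ₁)⁻¹) = C ⊙ S` and `E_d = T ⊙ D`. Since `(X F) ⊙ (X G) = X (F ⊙ G)` and
`(F (1 - uX)) ⊙ G = F ⊙ G - u (XF) ⊙ G`, every Hadamard product in the identity is a linear
combination of `T ⊙ S`, `(XT) ⊙ S` and `T ⊙ (XS)` with coefficients in `ℂ[X]`, and the identity
becomes a polynomial identity in `γ₁, δ₁, X` once `γ₁ γ₁⁻¹ = δ₁ δ₁⁻¹ = 1`.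
-/

open PowerSeries

/-- `∏_j (1 - γ_j X)⁻¹` as a formal power series. -/
noncomputable def geomProd {n : ℕ} (γ : Fin n → ℂ) : PowerSeries ℂ :=
  ∏ j, (1 - PowerSeries.C (γ j) * X)⁻¹

/-- Hadamard (diagonal) product of two power series. -/
noncomputable def hadamard (F G : PowerSeries ℂ) : PowerSeries ℂ :=
  PowerSeries.mk fun n => coeff n F * coeff n G

section Field

variable {k : Type*} [Field k]

lemma inv_one_sub_C_mul_X_eq_mk (u : k) : (1 - C u * X)⁻¹ = mk fun n => u ^ n := by
  rw [PowerSeries.inv_eq_iff_mul_eq_one (by simp)]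
  simpa [rescale_mk, rescale_X] using congrArg (rescale u) (mk_one_mul_one_sub_eq_one (S := k))

lemma coeff_mul_inv_one_sub_C_mul_X (F : k⟦X⟧) (u : k) (n : ℕ) :
    coeff n (F * (1 - C u * X)⁻¹) = ∑ g ∈ Finset.range (n + 1), coeff g F * u ^ (n - g) := by
  rw [inv_one_sub_C_mul_X_eq_mk, coeff_mul,
    Finset.Nat.sum_antidiagonal_eq_sum_range_succ fun i j => coeff i F * coeff j (mk (u ^ ·))]
  simp

lemma mul_one_sub_C_mul_X_mul_inv (F : k⟦X⟧) (u : k) :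
    F * (1 - C u * X) * (1 - C u * X)⁻¹ = F := by
  rw [mul_assoc, PowerSeries.mul_inv_cancel _ (by simp), mul_one]

end Field

section Hadamard

@[simp]
lemma coeff_hadamard (F G : ℂ⟦X⟧) (n : ℕ) : coeff n (hadamard F G) = coeff n F * coeff n G :=
  coeff_mk _ _

lemma hadamard_comm (F G : ℂ⟦X⟧) : hadamard F G = hadamard G F := by
  ext n
  simp [mul_comm]

lemma hadamard_X_mul_X_mul (F G : ℂ⟦X⟧) : hadamard (X * F) (X * G) = X * hadamard F G := by
  ext n
  cases n <;> simp [coeff_succ_X_mul]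

lemma hadamard_mul_one_sub_C_mul_X_left (F G : ℂ⟦X⟧) (u : ℂ) :
    hadamard (F * (1 - C u * X)) G = hadamard F G - C u * hadamard (X * F) G := by
  rw [show F * (1 - C u * X) = F - C u * (X * F) by ring]
  ext n
  simp only [coeff_hadamard, map_sub, coeff_C_mul]
  ring

lemma hadamard_mul_one_sub_C_mul_X_right (F G : ℂ⟦X⟧) (u : ℂ) :
    hadamard F (G * (1 - C u * X)) = hadamard F G - C u * hadamard F (X * G) := by
  rw [hadamard_comm, hadamard_mul_one_sub_C_mul_X_left, hadamard_comm, hadamard_comm (X * G)]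

lemma mk_coeff_mul_sum_eq_hadamard (F G : ℂ⟦X⟧) (u : ℂ) :
    (mk fun n => coeff n F * ∑ g ∈ Finset.range (n + 1), coeff g G * u ^ (n - g)) =
      hadamard F (G * (1 - C u * X)⁻¹) := by
  ext n
  simp [coeff_mul_inv_one_sub_C_mul_X]

lemma hadamard_swap_roots (F G : ℂ⟦X⟧) {a b : ℂ} (ha : a ≠ 0) (hb : b ≠ 0) :
    hadamard (F * (1 - C a * X) * (1 - C b⁻¹ * X)⁻¹) (G * (1 - C b * X) * (1 - C a⁻¹ * X)⁻¹) *
        (1 - C (a * b)⁻¹ * X) =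
      (1 - X) * C (1 - a * b) *
          (hadamard F (G * (1 - C a⁻¹ * X)⁻¹) + hadamard G (F * (1 - C b⁻¹ * X)⁻¹)) +
        (-1 + (2 - X) * C (a * b)) * hadamard F G := by
  obtain ⟨T, rfl⟩ : ∃ T, F = T * (1 - C b⁻¹ * X) :=
    ⟨F * (1 - C b⁻¹ * X)⁻¹, by rw [mul_right_comm, mul_one_sub_C_mul_X_mul_inv]⟩
  obtain ⟨S, rfl⟩ : ∃ S, G = S * (1 - C a⁻¹ * X) :=
    ⟨G * (1 - C a⁻¹ * X)⁻¹, by rw [mul_right_comm, mul_one_sub_C_mul_X_mul_inv]⟩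
  rw [mul_right_comm T, mul_right_comm S]
  simp only [mul_one_sub_C_mul_X_mul_inv]
  rw [hadamard_comm (S * _)]
  simp only [hadamard_mul_one_sub_C_mul_X_left, hadamard_mul_one_sub_C_mul_X_right,
    hadamard_X_mul_X_mul]
  have hA : C a * C a⁻¹ = (1 : ℂ⟦X⟧) := by rw [← map_mul, mul_inv_cancel₀ ha, map_one]
  have hB : C b * C b⁻¹ = (1 : ℂ⟦X⟧) := by rw [← map_mul, mul_inv_cancel₀ hb, map_one]
  simp only [map_sub, map_one, map_mul, mul_inv]
  set P := hadamard T S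
  set Q := hadamard (X * T) S
  set R := hadamard T (X * S)
  linear_combination
    (C b⁻¹ * X * Q + C b * R - 2 * C b * C b⁻¹ * X * P) * hA +
      (C a * Q + C a⁻¹ * X * R - 2 * X * P) * hB

end Hadamard

/-- The identity
`Ẽ(X)(1 - X/(γ₁δ₁)) = (1-X)(1-γ₁δ₁)(E_c + E_d) + (-1 + (2-X)γ₁δ₁) E`,
where `C = ∏(1-γ_jX)⁻¹`, `D = ∏(1-δ_kX)⁻¹`, `E` is their Hadamard product, `C̃, D̃`
arise from `C, D` by replacing `γ₁ ↦ 1/δ₁`, `δ₁ ↦ 1/γ₁`, `Ẽ` is the Hadamard product of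
`C̃, D̃`, and `E_c(X) = ∑_{g,m} c_{g+m} d_g X^{g+m} γ₁^{-m}`,
`E_d(X) = ∑_{g,n} c_g d_{g+n} X^{g+n} δ₁^{-n}`; stated as formal power series. -/
theorem stmt_9 (J K : ℕ) (γ : Fin (J + 1) → ℂ) (δ : Fin (K + 1) → ℂ)
    (hγ : ∀ j, γ j ≠ 0) (hδ : ∀ k, δ k ≠ 0) :
    hadamard
        (geomProd γ * (1 - PowerSeries.C (γ 0) * X) * (1 - PowerSeries.C (δ 0)⁻¹ * X)⁻¹)
        (geomProd δ * (1 - PowerSeries.C (δ 0) * X) * (1 - PowerSeries.C (γ 0)⁻¹ * X)⁻¹) *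
      (1 - PowerSeries.C (γ 0 * δ 0)⁻¹ * X) =
    (1 - X) * PowerSeries.C (1 - γ 0 * δ 0) *
        (PowerSeries.mk (fun n => coeff n (geomProd γ) *
            ∑ g ∈ Finset.range (n + 1), coeff g (geomProd δ) * (γ 0)⁻¹ ^ (n - g)) +
          PowerSeries.mk (fun n => coeff n (geomProd δ) *
            ∑ g ∈ Finset.range (n + 1), coeff g (geomProd γ) * (δ 0)⁻¹ ^ (n - g))) +
      (-1 + (2 - X) * PowerSeries.C (γ 0 * δ 0)) * hadamard (geomProd γ) (geomProd δ) := by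
  rw [mk_coeff_mul_sum_eq_hadamard, mk_coeff_mul_sum_eq_hadamard]
  exact hadamard_swap_roots _ _ (hγ 0) (hδ 0)
end
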